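/- arXiv:2206.06726 — 2 statements merged into one kernel-verified Lean document; each statement's English description precedes it below -/
import Mathlib

section
/- Let 2<α<3, let h ∈ C([0,1]), let k ∈ C¹([0,1]) with k(0)=0, and let η₁, η₂ ∈ C([0,1]). Suppose y ∈ C³([0,1]) satisfies the fractional boundary value problem: ᶜDᵅy(t) = h(t) + ᶜD^{α−2}k(t) for t ∈ (0,1), together with y''(0)=0, y(0)+y'(0)=∫₀¹ η₁(s)ds and y(1)+y'(1)=∫₀¹ η₂(s)ds. Then for every t ∈ [0,1], y(t) = ∫₀¹ G(t,s)h(s)ds + ∫₀¹ H(t,s)k(s)ds + (2−t)∫₀¹ η₁(s)ds + (t−1)∫₀¹ η₂(s)ds. -/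
open MeasureTheory Set intervalIntegral

/-- Green function `G` associated to the fractional BVP, `2 < α < 3`. -/
noncomputable def greenG (α t s : ℝ) : ℝ :=
  if s ≤ t then
    ((t - s) ^ (α - 1) + (1 - t) * (1 - s) ^ (α - 1)) / Real.Gamma α
      + (1 - t) * (1 - s) ^ (α - 2) / Real.Gamma (α - 1)
  else
    (1 - t) * (1 - s) ^ (α - 1) / Real.Gamma α
      + (1 - t) * (1 - s) ^ (α - 2) / Real.Gamma (α - 1)

/-- Kernel `H` associated to the fractional BVP. -/
noncomputable def kernelH (t s : ℝ) : ℝ :=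
  if s ≤ t then (t - s) + (1 - t) * (2 - s) else (1 - t) * (2 - s)

/-!
Write `I^a f (t) = Γ(a)⁻¹ ∫₀ᵗ (t - s)^(a-1) f(s) ds` for the Riemann–Liouville integral. With
`φ = y'' - k` (so `φ(0) = 0`), the equation says `h = I^(3-α) φ'` on `(0,1)`. The Green function
splits as `G(t,s) = (t-s)₊^(α-1)/Γ(α) + (1-t)((1-s)^(α-1)/Γ(α) + (1-s)^(α-2)/Γ(α-1))`, so
`∫ G h = I^α h(t) + (1-t)(I^α h(1) + I^(α-1) h(1))`. The semigroup law `I^a I^b = I^(a+b)`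
(Fubini and the Beta integral) followed by one integration by parts turns these into `I²φ(t)`,
`I²φ(1)` and `I¹φ(1)`, i.e. Taylor remainders of `y` minus the same integrals of `k`. Since
`H = G` at `α = 2`, the `H`-term is exactly those integrals of `k`, and the boundary conditions
account for what is left.
-/

open Real ProbabilityTheory

noncomputable def fracIntegral (a : ℝ) (f : ℝ → ℝ) (t : ℝ) : ℝ :=
  1 / Gamma a * ∫ s in (0:ℝ)..t, (t - s) ^ (a - 1) * f s

section Beta

variable {a b : ℝ}

lemma integral_rpow_mul_one_sub_rpow_eq_beta (ha : 0 < a) (hb : 0 < b) :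
    ∫ x in (0:ℝ)..1, x ^ (a - 1) * (1 - x) ^ (b - 1) = beta a b := by
  have hcast : Complex.betaIntegral a b
      = ↑(∫ x in (0:ℝ)..1, x ^ (a - 1) * (1 - x) ^ (b - 1)) := by
    rw [Complex.betaIntegral, ← intervalIntegral.integral_ofReal]
    refine integral_congr fun x hx => ?_
    rw [uIcc_of_le zero_le_one] at hx
    push_cast
    rw [Complex.ofReal_cpow hx.1, Complex.ofReal_cpow (sub_nonneg.2 hx.2)]
    push_cast
    ring_nf
  rw [beta_eq_betaIntegralReal a b ha hb, hcast, Complex.ofReal_re]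

lemma integral_sub_rpow_mul_sub_rpow_eq_beta {u v : ℝ} (ha : 0 < a) (hb : 0 < b) (huv : u < v) :
    ∫ s in u..v, (v - s) ^ (a - 1) * (s - u) ^ (b - 1) = beta a b * (v - u) ^ (a + b - 1) := by
  have hvu : 0 < v - u := sub_pos.2 huv
  have hsubst := integral_comp_sub_mul
    (fun s => (v - s) ^ (a - 1) * (s - u) ^ (b - 1)) (a := 0) (b := 1) hvu.ne' v
  simp only [mul_one, mul_zero, sub_zero, sub_sub_cancel, smul_eq_mul] at hsubst
  have hscale : ∀ x ∈ uIcc (0:ℝ) 1, ((v - u) * x) ^ (a - 1) * (v - (v - u) * x - u) ^ (b - 1)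
      = (v - u) ^ (a + b - 2) * (x ^ (a - 1) * (1 - x) ^ (b - 1)) := by
    intro x hx
    rw [uIcc_of_le zero_le_one] at hx
    rw [show v - (v - u) * x - u = (v - u) * (1 - x) by ring,
      mul_rpow hvu.le hx.1, mul_rpow hvu.le (sub_nonneg.2 hx.2),
      show a + b - 2 = (a - 1) + (b - 1) by ring, rpow_add hvu]
    ring
  rw [integral_congr hscale, intervalIntegral.integral_const_mul,
    integral_rpow_mul_one_sub_rpow_eq_beta ha hb, eq_inv_mul_iff_mul_eq₀ hvu.ne'] at hsubst
  rw [← hsubst, show a + b - 1 = (a + b - 2) + 1 by ring, rpow_add hvu, rpow_one]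
  ring

end Beta

section FracIntegral

variable {a t : ℝ} {f g : ℝ → ℝ}

lemma intervalIntegrable_sub_rpow_mul (ha : 0 < a) (hf : ContinuousOn f (uIcc 0 t)) :
    IntervalIntegrable (fun s => (t - s) ^ (a - 1) * f s) volume 0 t := by
  have hker : IntervalIntegrable (fun s => (t - s) ^ (a - 1)) volume 0 t := by
    simpa using (intervalIntegrable_rpow' (a := t - 0) (b := t - t) (r := a - 1)
      (by linarith)).comp_sub_left t
  exact hker.mul_continuousOn hf

lemma fracIntegral_congr (ht : 0 ≤ t) (hfg : EqOn f g (Ioo 0 t)) :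
    fracIntegral a f t = fracIntegral a g t := by
  rw [fracIntegral, fracIntegral, integral_of_le ht, integral_of_le ht,
    integral_Ioc_eq_integral_Ioo, integral_Ioc_eq_integral_Ioo,
    setIntegral_congr_fun measurableSet_Ioo fun s hs => by rw [hfg hs]]

lemma fracIntegral_sub (ha : 0 < a) (hf : Continuous f) (hg : Continuous g) :
    fracIntegral a (fun s => f s - g s) t = fracIntegral a f t - fracIntegral a g t := by
  simp only [fracIntegral, mul_sub]
  rw [integral_sub (intervalIntegrable_sub_rpow_mul ha hf.continuousOn)
    (intervalIntegrable_sub_rpow_mul ha hg.continuousOn), mul_sub]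

lemma fracIntegral_one_of_hasDerivAt {f' : ℝ → ℝ} (hf : ∀ x, HasDerivAt f (f' x) x)
    (hf' : Continuous f') (t : ℝ) : fracIntegral 1 f' t = f t - f 0 := by
  simp only [fracIntegral, Gamma_one, sub_self, rpow_zero, one_mul, div_one]
  exact integral_eq_sub_of_hasDerivAt (fun x _ => hf x) (hf'.intervalIntegrable 0 t)

/-- Integration by parts against `(t - s) ^ a`. -/
lemma fracIntegral_add_one_of_hasDerivAt (ha : 1 ≤ a) {f' : ℝ → ℝ}
    (hf : ∀ x, HasDerivAt f (f' x) x) (hf' : Continuous f') (t : ℝ) :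
    fracIntegral (a + 1) f' t = fracIntegral a f t - f 0 * t ^ a / Gamma (a + 1) := by
  have hker : ∀ x ∈ uIcc 0 t, HasDerivAt (fun s => (t - s) ^ a) (-a * (t - x) ^ (a - 1)) x := by
    intro x _
    simpa using ((hasDerivAt_id x).const_sub t).rpow_const (p := a) (Or.inr ha)
  have hparts := integral_mul_deriv_eq_deriv_mul hker (fun x _ => hf x)
    (((continuous_const.sub continuous_id).rpow_const fun _ => Or.inr (by linarith)).const_mul
      (-a) |>.intervalIntegrable 0 t) (hf'.intervalIntegrable 0 t)
  simp only [sub_self, zero_rpow (by positivity : a ≠ 0), zero_mul, sub_zero, zero_sub,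
    neg_mul, intervalIntegral.integral_neg, mul_assoc, intervalIntegral.integral_const_mul]
    at hparts
  rw [fracIntegral, fracIntegral, add_sub_cancel_right, hparts, Gamma_add_one (by positivity)]
  field_simp
  ring

end FracIntegral

section Semigroup

variable {a b t : ℝ}

noncomputable def fracCompKernel (a b t s u : ℝ) : ℝ :=
  if u < s then (t - s) ^ (a - 1) * (s - u) ^ (b - 1) else 0

lemma fracCompKernel_nonneg {s : ℝ} (hs : s ∈ Ioo 0 t) (u : ℝ) :
    0 ≤ fracCompKernel a b t s u := by
  unfold fracCompKernel
  split_ifs with hus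
  · exact mul_nonneg (rpow_nonneg (by linarith [hs.2]) _) (rpow_nonneg (by linarith) _)
  · exact le_rfl

lemma setIntegral_fracCompKernel (ha : 0 < a) (hb : 0 < b) {u : ℝ} (hu : u ∈ Ioo 0 t) :
    ∫ s in Ioo 0 t, fracCompKernel a b t s u = beta a b * (t - u) ^ (a + b - 1) := by
  have hind : (fun s => fracCompKernel a b t s u)
      = (Ioi u).indicator fun s => (t - s) ^ (a - 1) * (s - u) ^ (b - 1) := by
    ext s
    simp [fracCompKernel, indicator_apply]
  rw [hind, setIntegral_indicator measurableSet_Ioi, Ioo_inter_Ioi, max_eq_right hu.1.le,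
    ← integral_Ioc_eq_integral_Ioo, ← integral_of_le hu.2.le,
    integral_sub_rpow_mul_sub_rpow_eq_beta ha hb hu.2]

lemma setIntegral_fracCompKernel_mul {s : ℝ} (hs : s ∈ Ioo 0 t) (f : ℝ → ℝ) :
    ∫ u in Ioo 0 t, fracCompKernel a b t s u * f u
      = (t - s) ^ (a - 1) * ∫ u in (0:ℝ)..s, (s - u) ^ (b - 1) * f u := by
  have hind : (fun u => fracCompKernel a b t s u * f u)
      = (Iio s).indicator fun u => (t - s) ^ (a - 1) * ((s - u) ^ (b - 1) * f u) := by
    ext u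
    simp [fracCompKernel, indicator_apply, mul_assoc]
  rw [hind, setIntegral_indicator measurableSet_Iio, Ioo_inter_Iio, min_eq_right hs.2.le,
    integral_of_le hs.1.le, integral_Ioc_eq_integral_Ioo, MeasureTheory.integral_const_mul]

lemma integrable_fracCompKernel_mul (ha : 0 < a) (hb : 0 < b) (ht : 0 ≤ t) {f : ℝ → ℝ}
    (hf : Continuous f) :
    Integrable (Function.uncurry fun s u => fracCompKernel a b t s u * f u)
      ((volume.restrict (Ioo 0 t)).prod (volume.restrict (Ioo 0 t))) := by
  have hmeas : Measurable (Function.uncurry fun s u => fracCompKernel a b t s u * f u) :=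
    .mul (.ite (measurableSet_lt measurable_snd measurable_fst) (by fun_prop) measurable_const)
      (hf.measurable.comp measurable_snd)
  rw [integrable_prod_iff' hmeas.aestronglyMeasurable]
  constructor
  · refine (ae_restrict_iff' measurableSet_Ioo).2 (.of_forall fun u hu => ?_)
    -- a kernel with nonzero integral is integrable
    refine .mul_const (Integrable.of_integral_ne_zero (f := (fracCompKernel a b t · u)) ?_) (f u)
    rw [setIntegral_fracCompKernel ha hb hu]
    exact (mul_pos (beta_pos ha hb) (rpow_pos_of_pos (by linarith [hu.2]) _)).ne'
  · have hdom : IntegrableOn (fun u => beta a b * ((t - u) ^ (a + b - 1) * |f u|)) (Ioo 0 t) :=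
      ((intervalIntegrable_iff_integrableOn_Ioo_of_le ht).1
        (intervalIntegrable_sub_rpow_mul (add_pos ha hb) hf.abs.continuousOn)).const_mul _
    refine hdom.congr ((ae_restrict_iff' measurableSet_Ioo).2 (.of_forall fun u hu => ?_))
    have hnorm : ∫ s in Ioo 0 t, ‖fracCompKernel a b t s u * f u‖
        = ∫ s in Ioo 0 t, fracCompKernel a b t s u * |f u| :=
      setIntegral_congr_fun measurableSet_Ioo fun s hs => by
        rw [norm_eq_abs, abs_mul, abs_of_nonneg (fracCompKernel_nonneg hs u)]
    simp only [Function.uncurry_apply_pair]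
    rw [hnorm, MeasureTheory.integral_mul_const, setIntegral_fracCompKernel ha hb hu, mul_assoc]

lemma fracIntegral_fracIntegral (ha : 0 < a) (hb : 0 < b) (ht : 0 ≤ t) {f : ℝ → ℝ}
    (hf : Continuous f) :
    fracIntegral a (fracIntegral b f) t = fracIntegral (a + b) f t := by
  have hΓa := (Gamma_pos_of_pos ha).ne'
  have hΓb := (Gamma_pos_of_pos hb).ne'
  have hΓab := (Gamma_pos_of_pos (add_pos ha hb)).ne'
  have hLHS : fracIntegral a (fracIntegral b f) t = 1 / (Gamma a * Gamma b) *
      ∫ s in Ioo 0 t, ∫ u in Ioo 0 t, fracCompKernel a b t s u * f u := by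
    rw [setIntegral_congr_fun measurableSet_Ioo fun s hs => setIntegral_fracCompKernel_mul hs f,
      fracIntegral, integral_of_le ht, integral_Ioc_eq_integral_Ioo,
      ← MeasureTheory.integral_const_mul, ← MeasureTheory.integral_const_mul]
    refine setIntegral_congr_fun measurableSet_Ioo fun s _ => ?_
    simp only [fracIntegral]
    field_simp
  have hRHS : fracIntegral (a + b) f t = 1 / (Gamma a * Gamma b) *
      ∫ u in Ioo 0 t, ∫ s in Ioo 0 t, fracCompKernel a b t s u * f u := by
    rw [setIntegral_congr_fun measurableSet_Ioo fun u hu => by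
        rw [MeasureTheory.integral_mul_const, setIntegral_fracCompKernel ha hb hu],
      fracIntegral, integral_of_le ht, integral_Ioc_eq_integral_Ioo,
      ← MeasureTheory.integral_const_mul, ← MeasureTheory.integral_const_mul]
    refine setIntegral_congr_fun measurableSet_Ioo fun u _ => ?_
    simp only [beta]
    field_simp
  rw [hLHS, hRHS, integral_integral_swap (integrable_fracCompKernel_mul ha hb ht hf)]

lemma fracIntegral_eq_of_eqOn_fracIntegral_deriv (ha : 0 < a) (hb : 0 < b) (hab : 2 ≤ a + b)
    (ht : 0 ≤ t) {φ φ' h : ℝ → ℝ} (hφ : ∀ x, HasDerivAt φ (φ' x) x) (hφ' : Continuous φ')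
    (hφ0 : φ 0 = 0) (hh : EqOn h (fracIntegral b φ') (Ioo 0 t)) :
    fracIntegral a h t = fracIntegral (a + b - 1) φ t := by
  rw [fracIntegral_congr ht hh, fracIntegral_fracIntegral ha hb ht hφ',
    show a + b = a + b - 1 + 1 by ring,
    fracIntegral_add_one_of_hasDerivAt (by linarith) hφ hφ', hφ0]
  simp

end Semigroup

section Taylor

variable {y : ℝ → ℝ}

lemma hasDerivAt_iteratedDeriv {n : ℕ} {m : WithTop ℕ∞} (hy : ContDiff ℝ m y)
    (hn : (n : WithTop ℕ∞) < m) (x : ℝ) :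
    HasDerivAt (iteratedDeriv n y) (iteratedDeriv (n + 1) y x) x := by
  rw [iteratedDeriv_succ]
  exact (hy.differentiable_iteratedDeriv n hn x).hasDerivAt

lemma fracIntegral_one_iteratedDeriv_two (hy : ContDiff ℝ 2 y) (t : ℝ) :
    fracIntegral 1 (iteratedDeriv 2 y) t = deriv y t - deriv y 0 := by
  simpa [iteratedDeriv_one] using fracIntegral_one_of_hasDerivAt
    (hasDerivAt_iteratedDeriv hy (n := 1) (by norm_num)) (hy.continuous_iteratedDeriv 2 le_rfl) t

lemma fracIntegral_two_iteratedDeriv_two (hy : ContDiff ℝ 2 y) (t : ℝ) :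
    fracIntegral 2 (iteratedDeriv 2 y) t = y t - y 0 - deriv y 0 * t := by
  have h2 := fracIntegral_add_one_of_hasDerivAt le_rfl
    (hasDerivAt_iteratedDeriv hy (n := 1) (by norm_num)) (hy.continuous_iteratedDeriv 2 le_rfl) t
  have h1 := fracIntegral_one_of_hasDerivAt (hasDerivAt_iteratedDeriv hy (n := 0) (by norm_num))
    (hy.continuous_iteratedDeriv 1 (by norm_num)) t
  norm_num [iteratedDeriv_one] at h1 h2
  rw [h2, h1]

end Taylor

section Green

variable {α t : ℝ}

lemma greenG_eq (hα : 1 < α) (t s : ℝ) :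
    greenG α t s = max (t - s) 0 ^ (α - 1) / Gamma α
      + (1 - t) * ((1 - s) ^ (α - 1) / Gamma α + (1 - s) ^ (α - 1 - 1) / Gamma (α - 1)) := by
  rw [greenG, sub_sub, one_add_one_eq_two]
  split_ifs with hst
  · rw [max_eq_left (sub_nonneg.2 hst)]
    ring
  · rw [max_eq_right (by linarith), zero_rpow (by linarith)]
    ring

lemma kernelH_eq_greenG_two (t s : ℝ) : kernelH t s = greenG 2 t s := by
  norm_num [kernelH, greenG]
  split_ifs <;> ring

lemma integral_max_sub_rpow_mul {p : ℝ} (hp : 0 < p) (ht : t ∈ Icc (0:ℝ) 1) {h : ℝ → ℝ}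
    (hh : ContinuousOn h (Icc 0 1)) :
    ∫ s in (0:ℝ)..1, max (t - s) 0 ^ p * h s = ∫ s in (0:ℝ)..t, (t - s) ^ p * h s := by
  have hcont : ContinuousOn (fun s => max (t - s) 0 ^ p * h s) (Icc 0 1) :=
    ((by fun_prop : Continuous fun s : ℝ => max (t - s) 0).rpow_const
      fun _ => Or.inr hp.le).continuousOn.mul hh
  rw [← integral_add_adjacent_intervals
      ((hcont.mono (Icc_subset_Icc_right ht.2)).intervalIntegrable_of_Icc ht.1)
      ((hcont.mono (Icc_subset_Icc_left ht.1)).intervalIntegrable_of_Icc ht.2),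
    integral_congr (a := t) (b := 1) (g := fun _ => 0) fun s hs => by
      rw [uIcc_of_le ht.2] at hs
      simp [max_eq_right (sub_nonpos.2 hs.1), zero_rpow hp.ne'],
    intervalIntegral.integral_zero, add_zero]
  refine integral_congr fun s hs => ?_
  rw [uIcc_of_le ht.1] at hs
  simp only [max_eq_left (sub_nonneg.2 hs.2)]

lemma integral_greenG_mul (hα : 2 ≤ α) (ht : t ∈ Icc (0:ℝ) 1) {h : ℝ → ℝ}
    (hh : ContinuousOn h (Icc 0 1)) :
    ∫ s in (0:ℝ)..1, greenG α t s * h s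
      = fracIntegral α h t + (1 - t) * (fracIntegral α h 1 + fracIntegral (α - 1) h 1) := by
  have hker : ∀ p : ℝ, 0 ≤ p → IntervalIntegrable (fun s => (1 - s) ^ p * h s) volume 0 1 :=
    fun p hp => ContinuousOn.intervalIntegrable_of_Icc zero_le_one
      (((by fun_prop : Continuous fun s : ℝ => 1 - s).rpow_const (p := p)
        fun _ => Or.inr hp).continuousOn.mul hh)
  have hmax : IntervalIntegrable (fun s => max (t - s) 0 ^ (α - 1) * h s) volume 0 1 :=
    ContinuousOn.intervalIntegrable_of_Icc zero_le_one (((by fun_prop : Continuous fun s : ℝ =>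
      max (t - s) 0).rpow_const fun _ => Or.inr (by linarith)).continuousOn.mul hh)
  have hI2 := hker (α - 1) (by linarith)
  have hI3 := hker (α - 1 - 1) (by linarith)
  calc ∫ s in (0:ℝ)..1, greenG α t s * h s
      = ∫ s in (0:ℝ)..1, (1 / Gamma α * (max (t - s) 0 ^ (α - 1) * h s)
          + (1 - t) * (1 / Gamma α * ((1 - s) ^ (α - 1) * h s)
            + 1 / Gamma (α - 1) * ((1 - s) ^ (α - 1 - 1) * h s))) :=
        integral_congr fun s _ => by rw [greenG_eq (by linarith)]; ring
    _ = 1 / Gamma α * (∫ s in (0:ℝ)..1, max (t - s) 0 ^ (α - 1) * h s)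
          + (1 - t) * (1 / Gamma α * (∫ s in (0:ℝ)..1, (1 - s) ^ (α - 1) * h s)
            + 1 / Gamma (α - 1) * ∫ s in (0:ℝ)..1, (1 - s) ^ (α - 1 - 1) * h s) := by
        rw [integral_add (hmax.const_mul _)
            (((hI2.const_mul _).add (hI3.const_mul _)).const_mul _),
          intervalIntegral.integral_const_mul, intervalIntegral.integral_const_mul,
          integral_add (hI2.const_mul _) (hI3.const_mul _), intervalIntegral.integral_const_mul,
          intervalIntegral.integral_const_mul]
    _ = _ := by rw [integral_max_sub_rpow_mul (by linarith) ht hh]; rfl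

lemma integral_kernelH_mul (ht : t ∈ Icc (0:ℝ) 1) {k : ℝ → ℝ} (hk : ContinuousOn k (Icc 0 1)) :
    ∫ s in (0:ℝ)..1, kernelH t s * k s
      = fracIntegral 2 k t + (1 - t) * (fracIntegral 2 k 1 + fracIntegral 1 k 1) := by
  simp_rw [kernelH_eq_greenG_two]
  simpa [show (2:ℝ) - 1 = 1 by norm_num] using integral_greenG_mul le_rfl ht hk

end Green

theorem linear_bvp_green_representation_general
    (α : ℝ) (hα1 : 2 < α) (hα2 : α < 3)
    (h k η₁ η₂ y : ℝ → ℝ)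
    (hh : ContinuousOn h (Icc 0 1))
    (hk : ContDiff ℝ 1 k) (hk0 : k 0 = 0)
    (hy : ContDiff ℝ 3 y)
    (heq : ∀ t ∈ Ioo (0:ℝ) 1,
      (1 / Real.Gamma (3 - α)) * ∫ s in (0:ℝ)..t, (t - s) ^ (2 - α) * iteratedDeriv 3 y s
        = h t + (1 / Real.Gamma (3 - α)) * ∫ s in (0:ℝ)..t, (t - s) ^ (2 - α) * deriv k s)
    (hbc0 : iteratedDeriv 2 y 0 = 0)
    (hbc1 : y 0 + deriv y 0 = ∫ s in (0:ℝ)..1, η₁ s)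
    (hbc2 : y 1 + deriv y 1 = ∫ s in (0:ℝ)..1, η₂ s) :
    ∀ t ∈ Icc (0:ℝ) 1,
      y t = (∫ s in (0:ℝ)..1, greenG α t s * h s)
        + (∫ s in (0:ℝ)..1, kernelH t s * k s)
        + (2 - t) * (∫ s in (0:ℝ)..1, η₁ s)
        + (t - 1) * (∫ s in (0:ℝ)..1, η₂ s) := by
  intro t ht
  set φ : ℝ → ℝ := fun s => iteratedDeriv 2 y s - k s
  have hy2 : ContDiff ℝ 2 y := hy.of_le (by norm_num)
  have hy'' := hy2.continuous_iteratedDeriv 2 le_rfl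
  have hy''' := hy.continuous_iteratedDeriv 3 le_rfl
  have hk' := hk.continuous_deriv le_rfl
  have hφ (x : ℝ) : HasDerivAt φ (iteratedDeriv 3 y x - deriv k x) x :=
    (hasDerivAt_iteratedDeriv hy (n := 2) (by norm_num) x).sub
      (hk.differentiable one_ne_zero x).hasDerivAt
  have hh_eq : EqOn h (fracIntegral (3 - α) fun s => iteratedDeriv 3 y s - deriv k s) (Ioo 0 1) :=
    fun s hs => by
      rw [fracIntegral_sub (by linarith) hy''' hk']
      simp only [fracIntegral, show 3 - α - 1 = 2 - α by ring]
      linarith [heq s hs]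
  have hreduce (a : ℝ) (ha : α - 1 ≤ a) (τ : ℝ) (hτ : τ ∈ Icc (0:ℝ) 1) :
      fracIntegral a h τ = fracIntegral (a + (3 - α) - 1) φ τ :=
    fracIntegral_eq_of_eqOn_fracIntegral_deriv (by linarith) (by linarith) (by linarith) hτ.1 hφ
      (hy'''.sub hk') (by simp [φ, hbc0, hk0]) (hh_eq.mono (Ioo_subset_Ioo_right hτ.2))
  have hφ2 (τ : ℝ) : fracIntegral 2 φ τ = y τ - y 0 - deriv y 0 * τ - fracIntegral 2 k τ := by
    rw [fracIntegral_sub two_pos hy'' hk.continuous, fracIntegral_two_iteratedDeriv_two hy2]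
  have hφ1 : fracIntegral 1 φ 1 = deriv y 1 - deriv y 0 - fracIntegral 1 k 1 := by
    rw [fracIntegral_sub one_pos hy'' hk.continuous, fracIntegral_one_iteratedDeriv_two hy2]
  have h1 : (1:ℝ) ∈ Icc 0 1 := ⟨zero_le_one, le_rfl⟩
  rw [integral_greenG_mul hα1.le ht hh, integral_kernelH_mul ht hk.continuous.continuousOn,
    hreduce α (by linarith) t ht, hreduce α (by linarith) 1 h1, hreduce (α - 1) le_rfl 1 h1,
    show α + (3 - α) - 1 = 2 by ring, show α - 1 + (3 - α) - 1 = 1 by ring,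
    hφ2, hφ2, hφ1, ← hbc1, ← hbc2]
  ring

/-- For `2 < α < 3` and a C³ function `y`, if `y` solves the linear fractional BVP
`ᶜDᵅy(t) = h(t) + ᶜD^{α−2}k(t)` on `(0,1)` with `y''(0) = 0`,
`y(0) + y'(0) = ∫₀¹ η₁` and `y(1) + y'(1) = ∫₀¹ η₂`, then `y` is given by the
Green-function representation. -/
theorem linear_bvp_green_representation
    (α : ℝ) (hα1 : 2 < α) (hα2 : α < 3)
    (h k η₁ η₂ y : ℝ → ℝ)
    (hh : ContinuousOn h (Icc 0 1))
    (hk : ContDiff ℝ 1 k) (hk0 : k 0 = 0)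
    (hη₁ : ContinuousOn η₁ (Icc 0 1)) (hη₂ : ContinuousOn η₂ (Icc 0 1))
    (hy : ContDiff ℝ 3 y)
    (heq : ∀ t ∈ Ioo (0:ℝ) 1,
      (1 / Real.Gamma (3 - α)) * ∫ s in (0:ℝ)..t, (t - s) ^ (2 - α) * iteratedDeriv 3 y s
        = h t + (1 / Real.Gamma (3 - α)) * ∫ s in (0:ℝ)..t, (t - s) ^ (2 - α) * deriv k s)
    (hbc0 : iteratedDeriv 2 y 0 = 0)
    (hbc1 : y 0 + deriv y 0 = ∫ s in (0:ℝ)..1, η₁ s)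
    (hbc2 : y 1 + deriv y 1 = ∫ s in (0:ℝ)..1, η₂ s) :
    ∀ t ∈ Icc (0:ℝ) 1,
      y t = (∫ s in (0:ℝ)..1, greenG α t s * h s)
        + (∫ s in (0:ℝ)..1, kernelH t s * k s)
        + (2 - t) * (∫ s in (0:ℝ)..1, η₁ s)
        + (t - 1) * (∫ s in (0:ℝ)..1, η₂ s) :=
  linear_bvp_green_representation_general α hα1 hα2 h k η₁ η₂ y hh hk hk0 hy heq hbc0 hbc1 hbc2
end

section
/- Let 0<γ<1 and 2<α<3. For 0 ≤ t ≤ s ≤ 1, the Caputo derivative of order γ in the first variable of the Green function G satisfies ᶜDᵞₜG(t,s) = −(t^{1−γ}/Γ(2−γ)) · ((1−s)^{α−1}/Γ(α) + (1−s)^{α−2}/Γ(α−1)). -/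
open MeasureTheory Set intervalIntegral

/-- Caputo fractional derivative of order `γ ∈ (0,1)`. -/
noncomputable def caputo (γ : ℝ) (u : ℝ → ℝ) (t : ℝ) : ℝ :=
  (1 / Real.Gamma (1 - γ)) * ∫ s in (0:ℝ)..t, (t - s) ^ (-γ) * deriv u s

/-- Caputo derivative of order `γ` of the Green function `G` in its first variable. -/
noncomputable def caputoG (α γ t s : ℝ) : ℝ :=
  caputo γ (fun r => greenG α r s) t

/-! For `r < s` the map `r ↦ G(r, s)` is affine with slope `-((1-s)^{α-1}/Γ(α) + (1-s)^{α-2}/Γ(α-1))`,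
so for `t ≤ s` the Caputo derivative is that slope times `∫₀ᵗ (t-r)^{-γ} dr / Γ(1-γ) = t^{1-γ}/Γ(2-γ)`.
The kink of `G` at `r = s = t` is invisible to the integral. -/

theorem integral_sub_rpow {a : ℝ} (ha : -1 < a) (t : ℝ) :
    ∫ r in (0:ℝ)..t, (t - r) ^ a = t ^ (a + 1) / (a + 1) := by
  rw [integral_comp_sub_left (fun x : ℝ => x ^ a) t, sub_self, sub_zero,
    integral_rpow (Or.inl ha), Real.zero_rpow (by linarith), sub_zero]

theorem caputo_eq_of_deriv_eqOn_Ioo {γ c t : ℝ} {u : ℝ → ℝ} (hγ : γ < 1) (ht : 0 ≤ t)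
    (hu : EqOn (deriv u) (fun _ => c) (Ioo 0 t)) :
    caputo γ u t = c * t ^ (1 - γ) / Real.Gamma (2 - γ) := by
  have hγ' : 0 < 1 - γ := by linarith
  have hΓ : Real.Gamma (2 - γ) = (1 - γ) * Real.Gamma (1 - γ) := by
    rw [show 2 - γ = (1 - γ) + 1 by ring, Real.Gamma_add_one hγ'.ne']
  have hΓpos : 0 < Real.Gamma (1 - γ) := Real.Gamma_pos_of_pos hγ'
  have hcongr : (∫ r in (0:ℝ)..t, (t - r) ^ (-γ) * deriv u r)
      = ∫ r in (0:ℝ)..t, (t - r) ^ (-γ) * c :=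
    integral_congr_Ioo_of_le ht fun x hx => by rw [hu hx]
  have hkernel := integral_sub_rpow (a := -γ) (by linarith) t
  rw [show -γ + 1 = 1 - γ by ring] at hkernel
  rw [caputo, hcongr, intervalIntegral.integral_mul_const, hkernel, hΓ]
  field_simp

theorem deriv_greenG_of_lt {α s x : ℝ} (hx : x < s) :
    deriv (fun r => greenG α r s) x
      = -((1 - s) ^ (α - 1) / Real.Gamma α + (1 - s) ^ (α - 2) / Real.Gamma (α - 1)) := by
  set K := (1 - s) ^ (α - 1) / Real.Gamma α + (1 - s) ^ (α - 2) / Real.Gamma (α - 1)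
  have hlin : (fun r => greenG α r s) =ᶠ[nhds x] fun r => (1 - r) * K := by
    filter_upwards [Iio_mem_nhds hx] with y hy
    rw [greenG, if_neg (not_le.mpr hy)]
    ring
  rw [hlin.deriv_eq, ((hasDerivAt_id' x).const_sub 1 |>.mul_const K).deriv]
  ring

theorem caputoG_eq_of_le_general (γ α : ℝ) (hγ2 : γ < 1) :
    ∀ t s : ℝ, 0 ≤ t → t ≤ s → s ≤ 1 →
      caputoG α γ t s
        = -(t ^ (1 - γ) / Real.Gamma (2 - γ)) *
            ((1 - s) ^ (α - 1) / Real.Gamma α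
              + (1 - s) ^ (α - 2) / Real.Gamma (α - 1)) := by
  intro t s ht hts _
  rw [caputoG, caputo_eq_of_deriv_eqOn_Ioo hγ2 ht
    fun x hx => deriv_greenG_of_lt (hx.2.trans_le hts)]
  ring

/-- For `0 < γ < 1`, `2 < α < 3` and `0 ≤ t ≤ s ≤ 1`, the Caputo derivative of
order `γ` of `G` in its first variable is
`−(t^{1−γ}/Γ(2−γ)) ((1−s)^{α−1}/Γ(α) + (1−s)^{α−2}/Γ(α−1))`. -/
theorem caputoG_eq_of_le (γ α : ℝ) (hγ1 : 0 < γ) (hγ2 : γ < 1)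
    (hα1 : 2 < α) (hα2 : α < 3) :
    ∀ t s : ℝ, 0 ≤ t → t ≤ s → s ≤ 1 →
      caputoG α γ t s
        = -(t ^ (1 - γ) / Real.Gamma (2 - γ)) *
            ((1 - s) ^ (α - 1) / Real.Gamma α
              + (1 - s) ^ (α - 2) / Real.Gamma (α - 1)) :=
  caputoG_eq_of_le_general γ α hγ2
end
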